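/- Under assumptions (A1)-(A6), the multi-sample-split sequential rejection procedure satisfies P[R_i ⊆ F] ≥ (1−δ)^B − α for every i ∈ ℕ ∪ {∞}, where F = {C ∈ C : C ∩ S_0 ≠ ∅} is the collection of false null hypotheses. -/

import Mathlib

/-!
If no true null hypothesis `C` is rejected when the multiplicity adjustments are computed
relative to the full set `F` of false nulls, then by monotonicity of the adjustments and of the
aggregation no true null is rejected from any `R ⊆ F` either, so inductively every `R_i ⊆ F`.
By (A3) and (A6) the probability that some true null is rejected relative to `F` is at most
`α / B` times the sum, over the splits `b`, of the expected (A5)-weights of the true nulls,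
and (A5) bounds each of these `B` expectations by one. Hence `P[R_∞ ⊆ F] ≥ 1 - α`.
-/

open MeasureTheory Finset

attribute [local instance] Classical.propDecidable

/-- The sequence of rejection sets: `R_0 = ∅`, `R_{i+1} = R_i ∪ N(R_i)`. -/
def rejSeq15 {H : Type*} (N : Set H → Set H) : ℕ → Set H
  | 0 => ∅
  | i + 1 => rejSeq15 N i ∪ N (rejSeq15 N i)

theorem rejSeq15_subset {H : Type*} {N : Set H → Set H} {F : Set H}
    (hN : ∀ R ⊆ F, N R ⊆ F) (i : ℕ) : rejSeq15 N i ⊆ F := by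
  induction i with
  | zero => exact Set.empty_subset F
  | succ i ih => exact Set.union_subset ih (hN _ ih)

theorem iUnion_rejSeq15_subset {H : Type*} {N : Set H → Set H} {F : Set H}
    (hN : ∀ R ⊆ F, N R ⊆ F) : ⋃ i, rejSeq15 N i ⊆ F :=
  Set.iUnion_subset (rejSeq15_subset hN)

theorem sum_lintegral_le_lintegral_sum {Ω ι : Type*} [MeasurableSpace Ω] (μ : Measure Ω)
    (s : Finset ι) (f : ι → Ω → ENNReal) :
    ∑ i ∈ s, ∫⁻ ω, f i ω ∂μ ≤ ∫⁻ ω, ∑ i ∈ s, f i ω ∂μ := by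
  induction s using Finset.induction_on with
  | empty => simp
  | insert a s ha ih =>
    simp only [Finset.sum_insert ha]
    exact (add_le_add_right ih _).trans (le_lintegral_add _ _)

theorem measure_biUnion_le_mul_card {Ω ι κ : Type*} [MeasurableSpace Ω] (μ : Measure Ω)
    [IsProbabilityMeasure μ] [Fintype κ] (T : Finset ι) (E : ι → Set Ω)
    (w : ι → κ → Ω → ENNReal) (c : ENNReal)
    (hE : ∀ i ∈ T, μ (E i) ≤ c * ∑ k, ∫⁻ ω, w i k ω ∂μ)
    (hw : ∀ k ω, ∑ i ∈ T, w i k ω ≤ 1) :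
    μ (⋃ i ∈ T, E i) ≤ c * Fintype.card κ := by
  have hsplit : ∀ k, ∑ i ∈ T, ∫⁻ ω, w i k ω ∂μ ≤ 1 := fun k =>
    calc ∑ i ∈ T, ∫⁻ ω, w i k ω ∂μ ≤ ∫⁻ ω, ∑ i ∈ T, w i k ω ∂μ :=
          sum_lintegral_le_lintegral_sum μ T _
      _ ≤ ∫⁻ _, 1 ∂μ := lintegral_mono (hw k)
      _ = 1 := by simp
  calc μ (⋃ i ∈ T, E i) ≤ ∑ i ∈ T, μ (E i) := measure_biUnion_finset_le T E
    _ ≤ ∑ i ∈ T, c * ∑ k, ∫⁻ ω, w i k ω ∂μ := Finset.sum_le_sum hE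
    _ = c * ∑ k, ∑ i ∈ T, ∫⁻ ω, w i k ω ∂μ := by rw [← Finset.mul_sum, Finset.sum_comm]
    _ ≤ c * ∑ _k : κ, 1 := by gcongr with k; exact hsplit k
    _ = c * Fintype.card κ := by simp

theorem ENNReal.ofReal_div_natCast_mul_le (a : ℝ) (k : ℕ) :
    ENNReal.ofReal (a / k) * k ≤ ENNReal.ofReal a := by
  rcases Nat.eq_zero_or_pos k with rfl | hk
  · simp
  · rw [← ENNReal.ofReal_natCast k, ← ENNReal.ofReal_mul' k.cast_nonneg,
      div_mul_cancel₀ a (Nat.cast_ne_zero.2 hk.ne')]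

theorem one_sub_le_measure_compl_of_measure_le {Ω : Type*} [MeasurableSpace Ω] (μ : Measure Ω)
    [IsProbabilityMeasure μ] {s : Set Ω} {ε : ENNReal} (h : μ s ≤ ε) : 1 - ε ≤ μ sᶜ := by
  rw [tsub_le_iff_right, ← measure_univ (μ := μ), add_comm]
  exact (measure_univ_le_add_compl s).trans (add_le_add h le_rfl)

theorem ENNReal.ofReal_sub_le_one_sub {x a : ℝ} (hx : x ≤ 1) (ha : 0 ≤ a) :
    ENNReal.ofReal (x - a) ≤ 1 - ENNReal.ofReal a := by
  rw [← ENNReal.ofReal_one, ← ENNReal.ofReal_sub _ ha]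
  exact ENNReal.ofReal_le_ofReal (by linarith)

theorem stmt15_general {Ω : Type*} [MeasurableSpace Ω] (μ : Measure Ω) [IsProbabilityMeasure μ]
    (p B : ℕ)
    (Cfam : Finset (Finset (Fin p)))
    (S0 : Finset (Fin p))
    (Shat : Fin B → Ω → Finset (Fin p))
    (pv : Finset (Fin p) → Fin B → Ω → ℝ)
    (m : Finset (Fin p) → Fin B → Set (Finset (Fin p)) → Ω → ℝ)
    (aggr : (Fin B → ℝ) → ℝ)
    (α δ : ℝ) (hα : α ∈ Set.Ioo (0:ℝ) 1) (hδ : δ ∈ Set.Ioo (0:ℝ) 1)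
    (F : Set (Finset (Fin p))) (hF : F = {C | C ∈ Cfam ∧ (C ∩ S0).Nonempty})
    -- p-values take values in [0,1]
    (hpv01 : ∀ C b ω, pv C b ω ∈ Set.Icc (0:ℝ) 1)
    -- the aggregation function is monotone increasing
    (haggr : Monotone aggr)
    -- multiplicity adjustments are ≥ 1
    (hm1 : ∀ C b R ω, 1 ≤ m C b R ω)
    -- (A4) monotonicity of the multiplicity adjustments
    (hA4 : ∀ C b (R S : Set (Finset (Fin p))) ω, R ⊆ S → m C b S ω ≤ m C b R ω)
    -- (A5) single-step property
    (hA5 : ∀ ω b (R : Set (Finset (Fin p))),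
      ∑ C ∈ Cfam, (if C ∉ R ∧ (C ∩ Shat b ω).Nonempty then 1 / m C b R ω else 0) ≤ 1)
    -- (A3) correct testing property: p-values of true nulls are superuniform
    (hA3 : ∀ C ∈ Cfam, C ∩ S0 = ∅ → ∀ b, ∀ u ∈ Set.Icc (0:ℝ) 1,
      μ {ω | pv C b ω ≤ u} ≤ ENNReal.ofReal u)
    -- (A6) aggregation property
    (hA6 : ∀ C ∈ Cfam, ∀ R : Set (Finset (Fin p)),
      (∀ b, ∀ u ∈ Set.Icc (0:ℝ) 1, μ {ω | pv C b ω ≤ u} ≤ ENNReal.ofReal u) →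
      ∀ u ∈ Set.Icc (0:ℝ) 1,
        μ {ω | aggr (fun b => pv C b ω * m C b R ω) ≤ u}
          ≤ ENNReal.ofReal (u / B) *
              ∑ b, ∫⁻ ω, ENNReal.ofReal
                (if (C ∩ Shat b ω).Nonempty then 1 / m C b R ω else 0) ∂μ) :
    (∀ i : ℕ,
      ENNReal.ofReal ((1 - δ) ^ B - α)
        ≤ μ {ω | rejSeq15 (fun R =>
            {C | C ∈ Cfam ∧ C ∉ R ∧ aggr (fun b => pv C b ω * m C b R ω) ≤ α}) i ⊆ F}) ∧
    ENNReal.ofReal ((1 - δ) ^ B - α)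
      ≤ μ {ω | (⋃ i, rejSeq15 (fun R =>
          {C | C ∈ Cfam ∧ C ∉ R ∧ aggr (fun b => pv C b ω * m C b R ω) ≤ α}) i) ⊆ F} := by
  set T := Cfam.filter (· ∉ F)
  have htrue : ∀ C ∈ T, C ∈ Cfam ∧ C ∩ S0 = ∅ := fun C hC => by
    obtain ⟨hCfam, hCF⟩ := Finset.mem_filter.1 hC
    refine ⟨hCfam, Finset.not_nonempty_iff_eq_empty.1 fun hne => hCF ?_⟩
    exact hF ▸ ⟨hCfam, hne⟩
  set E : Finset (Fin p) → Set Ω := fun C => {ω | aggr (fun b => pv C b ω * m C b F ω) ≤ α}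
  have hsafe : (⋃ C ∈ T, E C)ᶜ ⊆ {ω | (⋃ i, rejSeq15 (fun R =>
      {C | C ∈ Cfam ∧ C ∉ R ∧ aggr (fun b => pv C b ω * m C b R ω) ≤ α}) i) ⊆ F} := by
    intro ω hω
    refine iUnion_rejSeq15_subset fun R hRF C ⟨hCfam, _, hrej⟩ => by_contra fun hCF => hω ?_
    refine Set.mem_biUnion (Finset.mem_filter.2 ⟨hCfam, hCF⟩) (le_trans (haggr fun b => ?_) hrej)
    exact mul_le_mul_of_nonneg_left (hA4 C b R F ω hRF) (hpv01 C b ω).1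
  set w : Finset (Fin p) → Fin B → Ω → ENNReal := fun C b ω =>
    ENNReal.ofReal (if (C ∩ Shat b ω).Nonempty then 1 / m C b F ω else 0)
  have hw : ∀ b ω, ∑ C ∈ T, w C b ω ≤ 1 := fun b ω => by
    rw [← ENNReal.ofReal_sum_of_nonneg fun C _ => ?_, ← ENNReal.ofReal_one]
    · refine ENNReal.ofReal_le_ofReal (le_of_eq_of_le ?_ (hA5 ω b F))
      simp only [T, Finset.sum_filter, ite_and]
    · split_ifs
      exacts [one_div_nonneg.2 (zero_le_one.trans (hm1 C b F ω)), le_rfl]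
  have hbad : μ (⋃ C ∈ T, E C) ≤ ENNReal.ofReal α := by
    have := measure_biUnion_le_mul_card μ T E w _ (fun C hC => hA6 C (htrue C hC).1 F
      (hA3 C (htrue C hC).1 (htrue C hC).2) α ⟨hα.1.le, hα.2.le⟩) hw
    rw [Fintype.card_fin] at this
    exact this.trans (ENNReal.ofReal_div_natCast_mul_le α B)
  have hpow : (1 - δ) ^ B ≤ 1 := pow_le_one₀ (by linarith [hδ.2]) (by linarith [hδ.1])
  have hU : ENNReal.ofReal ((1 - δ) ^ B - α) ≤ μ (⋃ C ∈ T, E C)ᶜ :=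
    (ENNReal.ofReal_sub_le_one_sub hpow hα.1.le).trans
      (one_sub_le_measure_compl_of_measure_le μ hbad)
  refine ⟨fun i => hU.trans (measure_mono fun ω hω => ?_), hU.trans (measure_mono hsafe)⟩
  exact (Set.subset_iUnion _ i).trans (hsafe hω)

/-- FWER control of the multi sample-splitting sequential rejection
procedure under (A1)–(A6): for every step `i ∈ ℕ` (and for `R_∞ = ⋃ i, R_i`),
`P[R_i ⊆ F] ≥ (1−δ)^B − α`, where `F = {C ∈ 𝒞 : C ∩ S_0 ≠ ∅}` is the collection of
false null hypotheses. The successor map is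
`N(R) = {C ∈ 𝒞\R : aggr(p^{C,(1)} m_C^(1)(R), …, p^{C,(B)} m_C^(B)(R)) ≤ α}`. -/
theorem stmt15 {Ω : Type*} [MeasurableSpace Ω] (μ : Measure Ω) [IsProbabilityMeasure μ]
    (n p B : ℕ) (hB : 0 < B)
    (Cfam : Finset (Finset (Fin p)))
    (S0 : Finset (Fin p))
    (Shat : Fin B → Ω → Finset (Fin p))
    (pv : Finset (Fin p) → Fin B → Ω → ℝ)
    (m : Finset (Fin p) → Fin B → Set (Finset (Fin p)) → Ω → ℝ)
    (aggr : (Fin B → ℝ) → ℝ)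
    (α δ : ℝ) (hα : α ∈ Set.Ioo (0:ℝ) 1) (hδ : δ ∈ Set.Ioo (0:ℝ) 1)
    (F : Set (Finset (Fin p))) (hF : F = {C | C ∈ Cfam ∧ (C ∩ S0).Nonempty})
    -- p-values take values in [0,1], and equal 1 when the cluster misses the screened set
    (hpv01 : ∀ C b ω, pv C b ω ∈ Set.Icc (0:ℝ) 1)
    (hpv1 : ∀ C b ω, C ∩ Shat b ω = ∅ → pv C b ω = 1)
    -- (A1) sparsity of the screened sets
    (hA1 : ∀ b ω, 2 * (Shat b ω).card < n)
    -- (A2) δ-screening property: screening succeeds in all B splits w.pr. ≥ (1−δ)^B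
    (hA2 : ENNReal.ofReal ((1 - δ) ^ B) ≤ μ {ω | ∀ b, S0 ⊆ Shat b ω})
    -- the aggregation function is monotone increasing
    (haggr : Monotone aggr)
    -- multiplicity adjustments are ≥ 1
    (hm1 : ∀ C b R ω, 1 ≤ m C b R ω)
    -- (A4) monotonicity of the multiplicity adjustments
    (hA4 : ∀ C b (R S : Set (Finset (Fin p))) ω, R ⊆ S → m C b S ω ≤ m C b R ω)
    -- (A5) single-step property
    (hA5 : ∀ ω b (R : Set (Finset (Fin p))),
      ∑ C ∈ Cfam, (if C ∉ R ∧ (C ∩ Shat b ω).Nonempty then 1 / m C b R ω else 0) ≤ 1)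
    -- (A3) correct testing property: p-values of true nulls are superuniform
    (hA3 : ∀ C ∈ Cfam, C ∩ S0 = ∅ → ∀ b, ∀ u ∈ Set.Icc (0:ℝ) 1,
      μ {ω | pv C b ω ≤ u} ≤ ENNReal.ofReal u)
    -- (A6) aggregation property
    (hA6 : ∀ C ∈ Cfam, ∀ R : Set (Finset (Fin p)),
      (∀ b, ∀ u ∈ Set.Icc (0:ℝ) 1, μ {ω | pv C b ω ≤ u} ≤ ENNReal.ofReal u) →
      ∀ u ∈ Set.Icc (0:ℝ) 1,
        μ {ω | aggr (fun b => pv C b ω * m C b R ω) ≤ u}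
          ≤ ENNReal.ofReal (u / B) *
              ∑ b, ∫⁻ ω, ENNReal.ofReal
                (if (C ∩ Shat b ω).Nonempty then 1 / m C b R ω else 0) ∂μ) :
    (∀ i : ℕ,
      ENNReal.ofReal ((1 - δ) ^ B - α)
        ≤ μ {ω | rejSeq15 (fun R =>
            {C | C ∈ Cfam ∧ C ∉ R ∧ aggr (fun b => pv C b ω * m C b R ω) ≤ α}) i ⊆ F}) ∧
    ENNReal.ofReal ((1 - δ) ^ B - α)
      ≤ μ {ω | (⋃ i, rejSeq15 (fun R =>
          {C | C ∈ Cfam ∧ C ∉ R ∧ aggr (fun b => pv C b ω * m C b R ω) ≤ α}) i) ⊆ F} :=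
  stmt15_general μ p B Cfam S0 Shat pv m aggr α δ hα hδ F hF hpv01 haggr hm1 hA4 hA5 hA3 hA6
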